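/- arXiv:2306.06654 — 3 statements merged into one kernel-verified Lean document; each statement's English description precedes it below -/
import Mathlib

section
/- Let d, k ≥ 1 and set n = d + k. Let A be a real n×d matrix and B a real n×k matrix such that BᵀB = I_k (B has orthonormal columns), AᵀB = 0, and the n×n block matrix (A|B) obtained by juxtaposing the columns of A and B has positive determinant. Then dist((A|B), SO(n)) = dist(A, {Q ∈ ℝ^{n×d} : QᵀQ = I_d}), where both distances are taken with respect to the Frobenius norm. -/
/-!
Write `M = (A|B)`. Since `det M > 0`, the polar decomposition `M = R S` has `R ∈ SO(n)` and
`S ⪰ 0`, so `tr (Mᵀ K) = tr (S Rᵀ K) ≤ tr S = tr (Mᵀ R)` for every contraction `K`. For an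
isometry `Q`, the matrix `K = ((1 - B Bᵀ) Q | B)` is a contraction with
`tr (Mᵀ K) = tr (Aᵀ Q) + k`; expanding the Frobenius norms, this is exactly
`‖M - R‖ ≤ ‖A - Q‖`. Conversely, the first `d` columns of any `X ∈ SO(n)` form an isometry `Q`
with `‖A - Q‖ ≤ ‖M - X‖`.
-/

open Matrix

/-- Frobenius norm of a real matrix. -/
noncomputable def frobNorm {m n : Type*} [Fintype m] [Fintype n] (A : Matrix m n ℝ) : ℝ :=
  Real.sqrt (∑ i, ∑ j, (A i j) ^ 2)

/-- Distance (w.r.t. the Frobenius norm) from a matrix to a set of matrices. -/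
noncomputable def frobDist {m n : Type*} [Fintype m] [Fintype n]
    (A : Matrix m n ℝ) (K : Set (Matrix m n ℝ)) : ℝ :=
  sInf ((fun X => frobNorm (A - X)) '' K)

/-- The special orthogonal group `SO(n)` as a set of real `n × n` matrices. -/
def SOset (n : ℕ) : Set (Matrix (Fin n) (Fin n) ℝ) :=
  {A | Aᵀ * A = 1 ∧ A.det = 1}

/-- The `n × (d + k)` matrix obtained by juxtaposing the columns of an `n × d` matrix `A`
and an `n × k` matrix `B`. -/
def juxt {n d k : ℕ} (A : Matrix (Fin n) (Fin d) ℝ) (B : Matrix (Fin n) (Fin k) ℝ) :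
    Matrix (Fin n) (Fin (d + k)) ℝ :=
  Matrix.of fun i => Fin.append (A i) (B i)

open scoped MatrixOrder

section Frobenius

variable {m n : Type*} [Fintype m] [Fintype n]

lemma frobNorm_sq (X : Matrix m n ℝ) : frobNorm X ^ 2 = (Xᵀ * X).trace := by
  rw [frobNorm, Real.sq_sqrt (by positivity), trace, Finset.sum_comm]
  simp [mul_apply, sq]

lemma frobNorm_le_frobNorm_iff {m' n' : Type*} [Fintype m'] [Fintype n'] {X : Matrix m n ℝ}
    {Y : Matrix m' n' ℝ} : frobNorm X ≤ frobNorm Y ↔ (Xᵀ * X).trace ≤ (Yᵀ * Y).trace := by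
  rw [← frobNorm_sq, ← frobNorm_sq]
  exact (pow_le_pow_iff_left₀ (Real.sqrt_nonneg _) (Real.sqrt_nonneg _) two_ne_zero).symm

lemma trace_transpose_sub_mul_sub (X Y : Matrix m n ℝ) :
    ((X - Y)ᵀ * (X - Y)).trace = (Xᵀ * X).trace - 2 * (Xᵀ * Y).trace + (Yᵀ * Y).trace := by
  have h : (Yᵀ * X).trace = (Xᵀ * Y).trace := by
    rw [← trace_transpose, transpose_mul, transpose_transpose]
  simp only [transpose_sub, Matrix.sub_mul, Matrix.mul_sub, trace_sub, h]
  ring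

lemma frobDist_le_frobDist {m' n' : Type*} [Fintype m'] [Fintype n'] {M : Matrix m n ℝ}
    {N : Matrix m' n' ℝ} {K : Set (Matrix m n ℝ)} {L : Set (Matrix m' n' ℝ)} (hL : L.Nonempty)
    (h : ∀ Y ∈ L, ∃ X ∈ K, frobNorm (M - X) ≤ frobNorm (N - Y)) :
    frobDist M K ≤ frobDist N L := by
  refine le_csInf (hL.image _) ?_
  rintro _ ⟨Y, hY, rfl⟩
  obtain ⟨X, hX, hXY⟩ := h Y hY
  exact csInf_le_of_le ⟨0, by rintro _ ⟨_, _, rfl⟩; exact Real.sqrt_nonneg _⟩ ⟨X, hX, rfl⟩ hXY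

end Frobenius

section Procrustes

variable {n : Type*} [Fintype n] [DecidableEq n]

theorem exists_specialOrthogonal_mul_posSemidef_of_det_pos {M : Matrix n n ℝ} (hM : 0 < M.det) :
    ∃ R S : Matrix n n ℝ, Rᵀ * R = 1 ∧ R.det = 1 ∧ S.PosSemidef ∧ M = R * S := by
  have hMM : (Mᵀ * M).PosSemidef := by
    simpa [conjTranspose_eq_transpose_of_trivial] using posSemidef_conjTranspose_mul_self M
  set S := CFC.sqrt (Mᵀ * M)
  have hS : S.PosSemidef := nonneg_iff_posSemidef.mp (CFC.sqrt_nonneg _)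
  have hSS : S * S = Mᵀ * M := CFC.sqrt_mul_sqrt_self _ hMM.nonneg
  have hST : Sᵀ = S := by simpa [conjTranspose_eq_transpose_of_trivial] using hS.isHermitian.eq
  have hdetS : S.det = M.det := by
    have h := congrArg det hSS
    rw [det_mul, det_mul, det_transpose] at h
    exact (mul_self_inj hS.det_nonneg hM.le).mp h
  have hSu : IsUnit S.det := (hdetS ▸ hM.ne').isUnit
  refine ⟨M * S⁻¹, S, ?_, ?_, hS, ?_⟩
  · rw [transpose_mul, transpose_nonsing_inv, hST, Matrix.mul_assoc, ← Matrix.mul_assoc Mᵀ,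
      ← hSS, Matrix.mul_assoc S, mul_nonsing_inv _ hSu, Matrix.mul_one, nonsing_inv_mul _ hSu]
  · rw [det_mul, det_nonsing_inv, hdetS, Ring.inverse_eq_inv', mul_inv_cancel₀ hM.ne']
  · rw [Matrix.mul_assoc, nonsing_inv_mul _ hSu, Matrix.mul_one]

theorem trace_mul_le_trace_of_posSemidef {S C : Matrix n n ℝ} (hS : S.PosSemidef)
    (hC : (1 - Cᵀ * C).PosSemidef) : (S * C).trace ≤ S.trace := by
  -- With `S = Tᵀ T`: `2 tr (T C Tᵀ) ≤ tr (T Tᵀ) + tr (T Cᵀ C Tᵀ) ≤ 2 tr (T Tᵀ)`.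
  obtain ⟨T, rfl⟩ := CStarAlgebra.nonneg_iff_eq_star_mul_self.mp hS.nonneg
  rw [star_eq_conjTranspose, conjTranspose_eq_transpose_of_trivial]
  have hsq : 0 ≤ ((T - T * Cᵀ) * (T - T * Cᵀ)ᵀ).trace := by
    simpa [conjTranspose_eq_transpose_of_trivial] using
      (posSemidef_self_mul_conjTranspose (T - T * Cᵀ)).trace_nonneg
  have hgap : 0 ≤ (T * (1 - Cᵀ * C) * Tᵀ).trace := by
    simpa [conjTranspose_eq_transpose_of_trivial] using
      (hC.mul_mul_conjTranspose_same T).trace_nonneg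
  have hsymm : (T * Cᵀ * Tᵀ).trace = (T * C * Tᵀ).trace := by
    rw [← trace_transpose]; simp [Matrix.mul_assoc]
  have hcyc : (Tᵀ * T * C).trace = (T * C * Tᵀ).trace := by
    rw [Matrix.mul_assoc, trace_mul_comm, Matrix.mul_assoc]
  rw [hcyc, trace_mul_comm Tᵀ T]
  simp only [transpose_sub, transpose_mul, transpose_transpose, sub_mul, mul_sub, Matrix.mul_one,
    trace_sub, Matrix.mul_assoc] at hsq hgap hsymm ⊢
  linarith

theorem exists_specialOrthogonal_forall_trace_transpose_mul_le {M : Matrix n n ℝ}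
    (hM : 0 < M.det) :
    ∃ R : Matrix n n ℝ, (Rᵀ * R = 1 ∧ R.det = 1) ∧
      ∀ K : Matrix n n ℝ, (1 - Kᵀ * K).PosSemidef → (Mᵀ * K).trace ≤ (Mᵀ * R).trace := by
  obtain ⟨R, S, hR, hRdet, hS, rfl⟩ := exists_specialOrthogonal_mul_posSemidef_of_det_pos hM
  have hST : Sᵀ = S := by simpa [conjTranspose_eq_transpose_of_trivial] using hS.isHermitian.eq
  have hRR : R * Rᵀ = 1 := mul_eq_one_comm.mp hR
  refine ⟨R, ⟨hR, hRdet⟩, fun K hK => ?_⟩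
  rw [transpose_mul, hST, Matrix.mul_assoc, Matrix.mul_assoc, hR, Matrix.mul_one]
  refine trace_mul_le_trace_of_posSemidef hS ?_
  rwa [transpose_mul, transpose_transpose, Matrix.mul_assoc, ← Matrix.mul_assoc R, hRR,
    Matrix.one_mul]

end Procrustes

lemma Matrix.PosSemidef.fromBlocks_zero {l n : Type*} [Fintype l] [Fintype n]
    {X : Matrix l l ℝ} (hX : X.PosSemidef) : (fromBlocks X 0 0 (0 : Matrix n n ℝ)).PosSemidef := by
  classical
  have h := hX.mul_mul_conjTranspose_same (fromRows (1 : Matrix l l ℝ) (0 : Matrix n l ℝ))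
  rw [fromRows_mul, conjTranspose_fromRows_eq_fromCols_conjTranspose, fromRows_mul_fromCols] at h
  simpa using h

lemma one_sub_transpose_mul_self_projection_mul {l m n : Type*} [Fintype l] [Fintype m]
    [Fintype n] [DecidableEq l] [DecidableEq m] [DecidableEq n] {Q : Matrix l m ℝ}
    {B : Matrix l n ℝ} (hQ : Qᵀ * Q = 1) (hB : Bᵀ * B = 1) :
    1 - ((1 - B * Bᵀ) * Q)ᵀ * ((1 - B * Bᵀ) * Q) = (Bᵀ * Q)ᵀ * (Bᵀ * Q) := by
  have hBBB : Bᵀ * (B * (Bᵀ * Q)) = Bᵀ * Q := by rw [← Matrix.mul_assoc, hB, Matrix.one_mul]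
  simp only [Matrix.sub_mul, Matrix.one_mul, transpose_sub, transpose_mul, transpose_transpose,
    Matrix.mul_sub, Matrix.mul_assoc, hBBB, hQ]
  abel

section Juxt

variable {m d k : ℕ}

lemma juxt_eq_submatrix_fromCols (A : Matrix (Fin m) (Fin d) ℝ) (B : Matrix (Fin m) (Fin k) ℝ) :
    juxt A B = (fromCols A B).submatrix id finSumFinEquiv.symm := by
  ext i j
  refine Fin.addCases (fun j => ?_) (fun j => ?_) j <;> simp [juxt]

lemma juxt_sub (A C : Matrix (Fin m) (Fin d) ℝ) (B D : Matrix (Fin m) (Fin k) ℝ) :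
    juxt A B - juxt C D = juxt (A - C) (B - D) := by
  ext i j
  refine Fin.addCases (fun j => ?_) (fun j => ?_) j <;> simp [juxt]

lemma exists_eq_juxt (X : Matrix (Fin m) (Fin (d + k)) ℝ) :
    ∃ (Q : Matrix (Fin m) (Fin d) ℝ) (X₂ : Matrix (Fin m) (Fin k) ℝ), X = juxt Q X₂ :=
  ⟨_, _, by rw [juxt_eq_submatrix_fromCols, fromCols_toCols (X.submatrix id finSumFinEquiv)]; simp⟩

lemma submatrix_transpose_juxt_mul_juxt (A C : Matrix (Fin m) (Fin d) ℝ)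
    (B D : Matrix (Fin m) (Fin k) ℝ) :
    ((juxt A B)ᵀ * juxt C D).submatrix finSumFinEquiv finSumFinEquiv =
      fromBlocks (Aᵀ * C) (Aᵀ * D) (Bᵀ * C) (Bᵀ * D) := by
  rw [juxt_eq_submatrix_fromCols, juxt_eq_submatrix_fromCols, transpose_submatrix,
    ← submatrix_mul _ _ _ _ _ Function.bijective_id, transpose_fromCols, fromRows_mul_fromCols]
  simp

lemma trace_transpose_juxt_mul_juxt (A C : Matrix (Fin m) (Fin d) ℝ)
    (B D : Matrix (Fin m) (Fin k) ℝ) :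
    ((juxt A B)ᵀ * juxt C D).trace = (Aᵀ * C).trace + (Bᵀ * D).trace := by
  simp [trace, mul_apply, Fin.sum_univ_add, juxt]

lemma transpose_mul_self_eq_one_of_juxt {Q : Matrix (Fin m) (Fin d) ℝ}
    {X₂ : Matrix (Fin m) (Fin k) ℝ} (h : (juxt Q X₂)ᵀ * juxt Q X₂ = 1) : Qᵀ * Q = 1 := by
  have h' := congrArg (submatrix · finSumFinEquiv finSumFinEquiv) h
  simp only [submatrix_transpose_juxt_mul_juxt, submatrix_one_equiv, ← fromBlocks_one] at h'
  exact (fromBlocks_inj.mp h').1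

lemma posSemidef_one_sub_transpose_juxt_mul_juxt {C : Matrix (Fin m) (Fin d) ℝ}
    {B : Matrix (Fin m) (Fin k) ℝ} (hC : (1 - Cᵀ * C).PosSemidef) (hB : Bᵀ * B = 1)
    (hCB : Cᵀ * B = 0) : (1 - (juxt C B)ᵀ * juxt C B).PosSemidef := by
  have hBC : Bᵀ * C = 0 := by simpa using congrArg transpose hCB
  rw [← posSemidef_submatrix_equiv finSumFinEquiv, submatrix_sub, Pi.sub_apply, Pi.sub_apply,
    submatrix_one_equiv, submatrix_transpose_juxt_mul_juxt, hCB, hBC, hB, ← fromBlocks_one,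
    sub_eq_add_neg, fromBlocks_neg, fromBlocks_add, ← sub_eq_add_neg]
  simpa using hC.fromBlocks_zero

lemma posSemidef_one_sub_transpose_juxt_mul_juxt_projection {Q : Matrix (Fin m) (Fin d) ℝ}
    {B : Matrix (Fin m) (Fin k) ℝ} (hQ : Qᵀ * Q = 1) (hB : Bᵀ * B = 1) :
    (1 - (juxt ((1 - B * Bᵀ) * Q) B)ᵀ * juxt ((1 - B * Bᵀ) * Q) B).PosSemidef := by
  have hPB : (1 - B * Bᵀ)ᵀ * B = 0 := by
    rw [transpose_sub, transpose_one, transpose_mul, transpose_transpose, Matrix.sub_mul,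
      Matrix.one_mul, Matrix.mul_assoc, hB, Matrix.mul_one, sub_self]
  refine posSemidef_one_sub_transpose_juxt_mul_juxt ?_ hB ?_
  · rw [one_sub_transpose_mul_self_projection_mul hQ hB]
    simpa [conjTranspose_eq_transpose_of_trivial] using posSemidef_conjTranspose_mul_self (Bᵀ * Q)
  · rw [transpose_mul, Matrix.mul_assoc, hPB, Matrix.mul_zero]

end Juxt

theorem frobDist_juxt_SO_eq_frobDist_isometries_general
    (d k : ℕ)
    (A : Matrix (Fin (d + k)) (Fin d) ℝ) (B : Matrix (Fin (d + k)) (Fin k) ℝ)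
    (hB : Bᵀ * B = 1) (hAB : Aᵀ * B = 0) (hdet : 0 < (juxt A B).det) :
    frobDist (juxt A B) (SOset (d + k)) =
      frobDist A {Q : Matrix (Fin (d + k)) (Fin d) ℝ | Qᵀ * Q = 1} := by
  have hIsom : {Q : Matrix (Fin (d + k)) (Fin d) ℝ | Qᵀ * Q = 1}.Nonempty := by
    obtain ⟨Q, X₂, h⟩ := exists_eq_juxt (1 : Matrix (Fin (d + k)) (Fin (d + k)) ℝ)
    exact ⟨Q, transpose_mul_self_eq_one_of_juxt (by rw [← h]; simp)⟩
  refine le_antisymm ?_ ?_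
  · obtain ⟨R, hR, hRmax⟩ := exists_specialOrthogonal_forall_trace_transpose_mul_le hdet
    refine frobDist_le_frobDist hIsom fun Q hQ => ⟨R, hR, ?_⟩
    have hK := hRmax _ (posSemidef_one_sub_transpose_juxt_mul_juxt_projection hQ hB)
    rw [trace_transpose_juxt_mul_juxt, ← Matrix.mul_assoc, Matrix.mul_sub, Matrix.mul_one,
      ← Matrix.mul_assoc, hAB, Matrix.zero_mul, sub_zero, hB] at hK
    rw [frobNorm_le_frobNorm_iff, trace_transpose_sub_mul_sub, trace_transpose_sub_mul_sub,
      trace_transpose_juxt_mul_juxt, hR.1, hB, (hQ : Qᵀ * Q = 1)]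
    simp only [trace_one, Fintype.card_fin] at hK ⊢
    push_cast
    linarith
  · refine frobDist_le_frobDist ⟨1, by simp [SOset]⟩ fun X hX => ?_
    obtain ⟨Q, X₂, rfl⟩ := exists_eq_juxt X
    refine ⟨Q, transpose_mul_self_eq_one_of_juxt hX.1, ?_⟩
    rw [juxt_sub, frobNorm_le_frobNorm_iff, trace_transpose_juxt_mul_juxt, ← frobNorm_sq (B - X₂)]
    exact le_add_of_nonneg_right (sq_nonneg _)

/-- If `B` has orthonormal columns, the columns of `A` are orthogonal to those of `B`, and
`(A|B)` has positive determinant, then `dist((A|B), SO(d+k)) = dist(A, O(d, d+k))`,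
where `O(d, d+k)` is the set of `(d+k) × d` matrices with orthonormal columns. -/
theorem frobDist_juxt_SO_eq_frobDist_isometries
    (d k : ℕ) (hd : 1 ≤ d) (hk : 1 ≤ k)
    (A : Matrix (Fin (d + k)) (Fin d) ℝ) (B : Matrix (Fin (d + k)) (Fin k) ℝ)
    (hB : Bᵀ * B = 1) (hAB : Aᵀ * B = 0) (hdet : 0 < (juxt A B).det) :
    frobDist (juxt A B) (SOset (d + k)) =
      frobDist A {Q : Matrix (Fin (d + k)) (Fin d) ℝ | Qᵀ * Q = 1} :=
  frobDist_juxt_SO_eq_frobDist_isometries_general d k A B hB hAB hdet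
end

section
/- Let d ≥ 1 and M ≥ 0. Let F and K be real (d+1)×d matrices, v ∈ ℝ^{d+1}, and let S be a real d×d matrix with operator norm ‖S‖_op ≤ M. If √(‖F‖_F² + ‖K‖_F²) ≥ (3+2M)·√(d+1), then √(‖F‖_F² + ‖K‖_F²) ≤ (3+2M)·( dist((F|v), SO(d+1)) + ‖F·S + K‖_F ). -/
open Matrix

/-- The `(d+1) × (d+1)` matrix `(F|v)` whose first `d` columns are those of the
`(d+1) × d` matrix `F` and whose last column is the vector `v`. -/
def juxtCol {m d : ℕ} (F : Matrix (Fin m) (Fin d) ℝ) (v : Fin m → ℝ) :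
    Matrix (Fin m) (Fin (d + 1)) ℝ :=
  Matrix.of fun i => Fin.snoc (F i) (v i)

/-!
On the right-hand side, `dist((F|v), SO(d+1)) ≥ ‖F‖ - √(d+1)` because every rotation has
Frobenius norm `√(d+1)`, and `‖F S + K‖ ≥ ‖K‖ - M ‖F‖` because right multiplication by `S`
scales each row of `F` by at most `‖S‖_op`. Hence `√(‖F‖² + ‖K‖²) ≤ ‖F‖ + ‖K‖` is bounded by
`(1 + M)(dist + √(d+1)) + ‖F S + K‖`, and the hypothesis makes the constant term `(1 + M)√(d+1)`
small compared to the left-hand side, so it can be absorbed.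
-/

section FrobeniusNorm

open scoped Matrix.Norms.Frobenius

variable {m n : Type*} [Fintype m] [Fintype n]

lemma frobNorm_eq_norm (A : Matrix m n ℝ) : frobNorm A = ‖A‖ := by
  simp only [frobNorm, Matrix.frobenius_norm_def, Real.norm_eq_abs, sq_abs, ← Real.sqrt_eq_rpow,
    Real.rpow_two]

lemma frobNorm_nonneg (A : Matrix m n ℝ) : 0 ≤ frobNorm A := Real.sqrt_nonneg _

lemma frobNorm_sub_frobNorm_le (A B : Matrix m n ℝ) :
    frobNorm A - frobNorm B ≤ frobNorm (A - B) := by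
  simpa only [frobNorm_eq_norm] using norm_sub_norm_le A B

lemma frobNorm_le_frobNorm_add_add (A B : Matrix m n ℝ) :
    frobNorm A ≤ frobNorm (A + B) + frobNorm B := by
  simpa only [frobNorm_eq_norm] using norm_le_add_norm_add A B

lemma frobNorm_sq_eq_sum_norm_row_sq (A : Matrix m n ℝ) :
    frobNorm A ^ 2 = ∑ i, ‖WithLp.toLp 2 (A i)‖ ^ 2 := by
  simp only [frobNorm, EuclideanSpace.real_norm_sq_eq]
  exact Real.sq_sqrt (by positivity)

end FrobeniusNorm

open scoped Matrix.Norms.L2Operator in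
lemma frobNorm_mul_le {m n p : Type*} [Fintype m] [Fintype n] [Fintype p] [DecidableEq p]
    (F : Matrix m n ℝ) (S : Matrix n p ℝ) : frobNorm (F * S) ≤ ‖S‖ * frobNorm F := by
  classical
  have hrow (i : m) : ‖WithLp.toLp 2 ((F * S) i)‖ ≤ ‖S‖ * ‖WithLp.toLp 2 (F i)‖ := by
    have := Matrix.l2_opNorm_mulVec Sᴴ (WithLp.toLp 2 (F i))
    rwa [Matrix.l2_opNorm_conjTranspose, ← Matrix.vecMul_transpose,
      Matrix.conjTranspose_eq_transpose_of_trivial] at this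
  refine (pow_le_pow_iff_left₀ (frobNorm_nonneg _)
    (mul_nonneg (norm_nonneg S) (frobNorm_nonneg F)) two_ne_zero).mp ?_
  rw [mul_pow, frobNorm_sq_eq_sum_norm_row_sq, frobNorm_sq_eq_sum_norm_row_sq, Finset.mul_sum]
  gcongr with i
  simpa only [mul_pow] using pow_le_pow_left₀ (norm_nonneg _) (hrow i) 2

lemma frobNorm_eq_sqrt_card_of_transpose_mul_self_eq_one {n : Type*} [Fintype n] [DecidableEq n]
    {X : Matrix n n ℝ} (hX : Xᵀ * X = 1) : frobNorm X = √(Fintype.card n) := by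
  have hcol (j : n) : ∑ i, X i j ^ 2 = 1 := by
    simpa [Matrix.mul_apply, sq] using congr_fun₂ hX j j
  simp [frobNorm, Finset.sum_comm (f := fun i j => X i j ^ 2), hcol]

lemma frobDist_nonneg {m n : Type*} [Fintype m] [Fintype n] (A : Matrix m n ℝ)
    (K : Set (Matrix m n ℝ)) : 0 ≤ frobDist A K :=
  Real.sInf_nonneg (by rintro _ ⟨X, -, rfl⟩; exact frobNorm_nonneg _)

lemma frobNorm_sub_sqrt_le_frobDist_SOset {n : ℕ} (A : Matrix (Fin n) (Fin n) ℝ) :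
    frobNorm A - √n ≤ frobDist A (SOset n) := by
  refine le_csInf ⟨_, 1, ⟨by simp, by simp⟩, rfl⟩ ?_
  rintro _ ⟨X, hX, rfl⟩
  simpa [frobNorm_eq_sqrt_card_of_transpose_mul_self_eq_one hX.1] using
    frobNorm_sub_frobNorm_le A X

lemma frobNorm_le_frobNorm_juxtCol {m d : ℕ} (F : Matrix (Fin m) (Fin d) ℝ) (v : Fin m → ℝ) :
    frobNorm F ≤ frobNorm (juxtCol F v) := by
  refine Real.sqrt_le_sqrt (Finset.sum_le_sum fun i _ => ?_)
  simpa [juxtCol, Fin.sum_univ_castSucc] using sq_nonneg (v i)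

theorem truncation_pointwise_estimate_general
    (d : ℕ) (M : ℝ)
    (F K : Matrix (Fin (d + 1)) (Fin d) ℝ) (v : Fin (d + 1) → ℝ)
    (S : Matrix (Fin d) (Fin d) ℝ)
    (hS : ‖Matrix.toEuclideanCLM (𝕜 := ℝ) S‖ ≤ M)
    (h : (3 + 2 * M) * Real.sqrt (d + 1) ≤ Real.sqrt (frobNorm F ^ 2 + frobNorm K ^ 2)) :
    Real.sqrt (frobNorm F ^ 2 + frobNorm K ^ 2) ≤
      (3 + 2 * M) * (frobDist (juxtCol F v) (SOset (d + 1)) + frobNorm (F * S + K)) := by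
  set Q := √(frobNorm F ^ 2 + frobNorm K ^ 2)
  set D := frobDist (juxtCol F v) (SOset (d + 1))
  set E := frobNorm (F * S + K)
  have hM : 0 ≤ M := (norm_nonneg _).trans hS
  have hF0 := frobNorm_nonneg F
  have hK0 := frobNorm_nonneg K
  have hQ : Q ≤ frobNorm F + frobNorm K :=
    (Real.sqrt_le_left (by positivity)).2 (by nlinarith)
  have hF : frobNorm F ≤ D + √(d + 1) := by
    have := frobNorm_sub_sqrt_le_frobDist_SOset (juxtCol F v)
    push_cast at this
    linarith [frobNorm_le_frobNorm_juxtCol F v]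
  have hK : frobNorm K ≤ E + M * frobNorm F :=
    calc frobNorm K ≤ frobNorm (K + F * S) + frobNorm (F * S) := frobNorm_le_frobNorm_add_add _ _
      _ ≤ E + M * frobNorm F := by
        rw [add_comm K]
        gcongr
        exact (frobNorm_mul_le F S).trans (mul_le_mul_of_nonneg_right hS hF0)
  have hQ' : Q ≤ (1 + M) * (D + √(d + 1)) + E := by nlinarith
  -- By `h`, `(1 + M)√(d + 1) ≤ (1 + M) Q / (3 + 2M)`; absorbing it into the left-hand side
  -- leaves `(2 + M) Q ≤ (3 + 2M) ((1 + M) D + E)`.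
  nlinarith [frobDist_nonneg (juxtCol F v) (SOset (d + 1)), frobNorm_nonneg (F * S + K),
    mul_le_mul_of_nonneg_left h (by linarith : (0 : ℝ) ≤ 1 + M)]

/-- Pointwise truncation estimate: if `√(‖F‖² + ‖K‖²) ≥ (3+2M)√(d+1)` and `‖S‖_op ≤ M`, then
`√(‖F‖² + ‖K‖²) ≤ (3+2M)·(dist((F|v), SO(d+1)) + ‖F·S + K‖)`. -/
theorem truncation_pointwise_estimate
    (d : ℕ) (hd : 1 ≤ d) (M : ℝ) (hM : 0 ≤ M)
    (F K : Matrix (Fin (d + 1)) (Fin d) ℝ) (v : Fin (d + 1) → ℝ)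
    (S : Matrix (Fin d) (Fin d) ℝ)
    (hS : ‖Matrix.toEuclideanCLM (𝕜 := ℝ) S‖ ≤ M)
    (h : (3 + 2 * M) * Real.sqrt (d + 1) ≤ Real.sqrt (frobNorm F ^ 2 + frobNorm K ^ 2)) :
    Real.sqrt (frobNorm F ^ 2 + frobNorm K ^ 2) ≤
      (3 + 2 * M) * (frobDist (juxtCol F v) (SOset (d + 1)) + frobNorm (F * S + K)) :=
  truncation_pointwise_estimate_general d M F K v S hS h
end

section
/- Let n ≥ 1 and let ν be a Borel probability measure on the space of real n×n matrices (with its Euclidean/Frobenius structure) that is supported on SO(n), i.e. ν(SO(n)) = 1. If the barycenter B = ∫ A dν(A) (a Bochner integral, which exists since SO(n) is bounded) belongs to SO(n), then ν is the Dirac measure δ_B concentrated at B. -/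
open Matrix MeasureTheory

/-- The standard (Borel) measurable structure on `n × n` real matrices, i.e. the product
σ-algebra of the Euclidean space of matrices. -/
noncomputable instance matrixMeasurableSpace (n : ℕ) :
    MeasurableSpace (Matrix (Fin n) (Fin n) ℝ) :=
  MeasurableSpace.pi

attribute [local instance] Matrix.normedAddCommGroup Matrix.normedSpace

/-!
The Frobenius norm is a Euclidean, hence strictly convex, norm, and every matrix `A` with
`Aᵀ * A = 1` lies on its sphere of radius `√n` (the squared norm is `trace (Aᵀ * A) = n`).
A probability measure carried by the closed ball of a strictly convex norm whose barycenter lies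
on the bounding sphere is the Dirac mass at its barycenter: otherwise the barycenter would be
a proper average of points of the ball and would lie in its interior.
-/

instance matrixBorelSpace (n : ℕ) : BorelSpace (Matrix (Fin n) (Fin n) ℝ) :=
  Pi.borelSpace

theorem MeasureTheory.Measure.eq_dirac_of_ae_eq {α : Type*} [MeasurableSpace α] {μ : Measure α}
    [IsProbabilityMeasure μ] {a : α} (h : ∀ᵐ x ∂μ, x = a) : μ = Measure.dirac a :=
  calc μ = μ.map id := Measure.map_id.symm
    _ = μ.map (fun _ ↦ a) := Measure.map_congr h
    _ = Measure.dirac a := by rw [Measure.map_const, measure_univ, one_smul]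

theorem ae_eq_integral_of_norm_le_of_norm_integral_eq {α E : Type*} [MeasurableSpace α]
    [NormedAddCommGroup E] [NormedSpace ℝ E] [CompleteSpace E] [StrictConvexSpace ℝ E]
    {μ : Measure α} [IsProbabilityMeasure μ] {f : α → E} {C : ℝ} (h_le : ∀ᵐ x ∂μ, ‖f x‖ ≤ C)
    (h_eq : ‖∫ x, f x ∂μ‖ = C) : f =ᵐ[μ] fun _ ↦ ∫ x, f x ∂μ := by
  have := ae_eq_const_or_norm_average_lt_of_norm_le_const h_le
  rwa [average_eq_integral, h_eq, or_iff_left (lt_irrefl C)] at this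

theorem MeasureTheory.Measure.eq_dirac_integral_of_norm_le_of_norm_integral_eq
    {E F : Type*} [NormedAddCommGroup E] [NormedSpace ℝ E] [MeasurableSpace E]
    [NormedAddCommGroup F] [NormedSpace ℝ F] [CompleteSpace F] [StrictConvexSpace ℝ F]
    {μ : Measure E} [IsProbabilityMeasure μ] (L : E ≃L[ℝ] F) {C : ℝ}
    (h_le : ∀ᵐ x ∂μ, ‖L x‖ ≤ C) (h_eq : ‖L (∫ x, x ∂μ)‖ = C) :
    μ = Measure.dirac (∫ x, x ∂μ) := by
  rw [← L.integral_comp_comm] at h_eq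
  refine eq_dirac_of_ae_eq ((ae_eq_integral_of_norm_le_of_norm_integral_eq h_le h_eq).mono
    fun x hx ↦ L.injective ?_)
  rw [hx, L.integral_comp_comm]

namespace Matrix

noncomputable def frobeniusEquiv (m n : Type*) [Fintype m] [Fintype n] :
    Matrix m n ℝ ≃L[ℝ] EuclideanSpace ℝ (m × n) :=
  ((LinearEquiv.curry ℝ ℝ m n).symm.trans
    (WithLp.linearEquiv 2 ℝ (m × n → ℝ)).symm).toContinuousLinearEquiv

@[simp]
theorem frobeniusEquiv_apply {m n : Type*} [Fintype m] [Fintype n] (A : Matrix m n ℝ)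
    (p : m × n) : frobeniusEquiv m n A p = A p.1 p.2 :=
  rfl

theorem norm_frobeniusEquiv_sq {m n : Type*} [Fintype m] [Fintype n] (A : Matrix m n ℝ) :
    ‖frobeniusEquiv m n A‖ ^ 2 = ∑ i, ∑ j, A i j ^ 2 := by
  rw [EuclideanSpace.norm_sq_eq, Fintype.sum_prod_type]
  simp

theorem sum_sq_entries_eq_card_of_transpose_mul_self_eq_one {n R : Type*} [Fintype n]
    [DecidableEq n] [CommSemiring R] {A : Matrix n n R} (hA : Aᵀ * A = 1) :
    ∑ i, ∑ j, A i j ^ 2 = Fintype.card n := by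
  rw [← trace_one, ← hA, Finset.sum_comm]
  simp [trace, mul_apply, sq]

theorem norm_frobeniusEquiv_of_transpose_mul_self_eq_one {n : Type*} [Fintype n] [DecidableEq n]
    {A : Matrix n n ℝ} (hA : Aᵀ * A = 1) : ‖frobeniusEquiv n n A‖ = √(Fintype.card n) := by
  rw [← Real.sqrt_sq (norm_nonneg _), norm_frobeniusEquiv_sq,
    sum_sq_entries_eq_card_of_transpose_mul_self_eq_one hA]

end Matrix

theorem isClosed_SOset (n : ℕ) : IsClosed (SOset n) :=
  (isClosed_eq (continuous_id.matrix_transpose.matrix_mul continuous_id) continuous_const).inter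
    (isClosed_eq continuous_id.matrix_det continuous_const)

theorem measure_supported_on_SO_barycenter_mem_SO_eq_dirac_general
    (n : ℕ) (ν : Measure (Matrix (Fin n) (Fin n) ℝ))
    [IsProbabilityMeasure ν] (hsupp : ν (SOset n) = 1)
    (hbar : (∫ A, A ∂ν) ∈ SOset n) :
    ν = Measure.dirac (∫ A, A ∂ν) := by
  have hae : ∀ᵐ A ∂ν, A ∈ SOset n :=
    (prob_compl_eq_zero_iff (isClosed_SOset n).measurableSet).2 hsupp
  exact Measure.eq_dirac_integral_of_norm_le_of_norm_integral_eq (frobeniusEquiv (Fin n) (Fin n))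
    (hae.mono fun A hA ↦ (norm_frobeniusEquiv_of_transpose_mul_self_eq_one hA.1).le)
    (norm_frobeniusEquiv_of_transpose_mul_self_eq_one hbar.1)

/-- If `ν` is a Borel probability measure on `n × n` matrices supported on `SO(n)` whose
barycenter `∫ A dν(A)` belongs to `SO(n)`, then `ν` is the Dirac mass at its barycenter. -/
theorem measure_supported_on_SO_barycenter_mem_SO_eq_dirac
    (n : ℕ) (hn : 1 ≤ n) (ν : Measure (Matrix (Fin n) (Fin n) ℝ))
    [IsProbabilityMeasure ν] (hsupp : ν (SOset n) = 1)
    (hbar : (∫ A, A ∂ν) ∈ SOset n) :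
    ν = Measure.dirac (∫ A, A ∂ν) :=
  measure_supported_on_SO_barycenter_mem_SO_eq_dirac_general n ν hsupp hbar
end
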